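/- Let p ≥ 3 be an integer, σ₁ = (1 − cos(2π/p))/sin(2π/p), and Δ = {r ∈ S³ : ⟨u_k, r⟩ > 0 for all k ∈ {1,…,p−1}}. Then the frontier of Δ in S³ is the union of the three sets A = {r ∈ S³ : r₁ = σ₁·r₀, r₀ > 0}, B = {r ∈ S³ : r₁ = −σ₁·r₀, r₀ > 0}, and C = {r ∈ S³ : r₀ = 0 and r₁ = 0}, and these three sets are pairwise disjoint. -/

import Mathlib

open scoped RealInnerProductSpace

/-- The vector `u_k = (1 - cos(2πk/p), -sin(2πk/p), 0, 0) ∈ ℝ⁴`. -/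
noncomputable def uvec (p k : ℕ) : EuclideanSpace ℝ (Fin 4) :=
  WithLp.toLp 2 ![1 - Real.cos (2 * Real.pi * (k : ℝ) / (p : ℝ)),
    -Real.sin (2 * Real.pi * (k : ℝ) / (p : ℝ)), 0, 0]

/-- The unit sphere `S³ ⊆ ℝ⁴` as a topological space. -/
abbrev Sph3 : Type := Metric.sphere (0 : EuclideanSpace ℝ (Fin 4)) 1

/-- The normal fundamental domain `Δ = {r ∈ S³ | ⟪u_k, r⟫ > 0 for k = 1, …, p-1}`,
as a subset of the sphere `S³` with its subspace topology. -/
noncomputable def Delta (p : ℕ) : Set Sph3 :=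
  {r | ∀ k : ℕ, 1 ≤ k → k ≤ p - 1 → 0 < ⟪uvec p k, (r : EuclideanSpace ℝ (Fin 4))⟫}

/-!
With `β = π k / p` one has `⟪u_k, r⟫ = 2 sin β (sin β r₀ - cos β r₁)`, and the identity
`sin 2α · L_β = sin (β + α) · L_α + sin (β - α) · L_{π - α}` for `L_β = sin β r₀ - cos β r₁`
shows that the constraints `k = 1` and `k = p - 1` (angles `α = π / p` and `π - α`) imply all
others. Hence `Δ` is the wedge `|r₁| < tan (π / p) r₀`, and `σ₁ = tan (π / p)` by the half-angle
formula. On a sphere, the closure of `{ℓᵢ > 0 for all i}` is `{ℓᵢ ≥ 0 for all i}` whenever some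
vector makes all `ℓᵢ` positive, so the frontier of `Δ` is where both forms are `≥ 0` and one
vanishes, which splits into `A`, `B` and `C`.
-/

open Real Filter Topology Metric

section PolyhedralCone

variable {E ι : Type*} [NormedAddCommGroup E] [NormedSpace ℝ E] (ℓ : ι → E →L[ℝ] ℝ)

theorem closure_sphere_setOf_forall_pos {q : E} (hq : ∀ i, 0 < ℓ i q) :
    closure {r : sphere (0 : E) 1 | ∀ i, 0 < ℓ i r} = {r : sphere (0 : E) 1 | ∀ i, 0 ≤ ℓ i r} := by
  refine subset_antisymm (closure_minimal (fun r hr i => (hr i).le) ?_) fun r hr => ?_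
  · rw [Set.ofPred_forall]
    exact isClosed_iInter fun i => isClosed_le continuous_const (by fun_prop)
  -- push `r` towards `q`, then back onto the sphere
  set w : ℝ → E := fun u => (r : E) + u • q
  have hw : Tendsto w (𝓝[>] 0) (𝓝 r) := by
    have : Continuous w := by fun_prop
    simpa [w] using tendsto_nhdsWithin_of_tendsto_nhds (this.tendsto 0)
  have hr1 : ‖(r : E)‖ = 1 := norm_eq_of_mem_sphere r
  have hnormalize : Tendsto (fun u => ‖w u‖⁻¹ • w u) (𝓝[>] 0) (𝓝 r) := by
    simpa [hr1] using (hw.norm.inv₀ (by simp [hr1])).smul hw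
  rw [closure_subtype]
  refine mem_closure_of_tendsto hnormalize ?_
  filter_upwards [hw.eventually_ne (ne_zero_of_mem_unit_sphere r), self_mem_nhdsWithin]
    with u hwu (hu : 0 < u)
  refine ⟨⟨_, by simp [norm_smul, hwu]⟩, fun i => ?_, rfl⟩
  have : 0 < ℓ i (w u) := by simpa [w] using add_pos_of_nonneg_of_pos (hr i) (mul_pos hu (hq i))
  simpa using mul_pos (inv_pos.2 (norm_pos_iff.2 hwu)) this

theorem frontier_sphere_setOf_forall_pos [Finite ι] {q : E} (hq : ∀ i, 0 < ℓ i q) :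
    frontier {r : sphere (0 : E) 1 | ∀ i, 0 < ℓ i r} =
      {r : sphere (0 : E) 1 | (∀ i, 0 ≤ ℓ i r) ∧ ∃ i, ℓ i r = 0} := by
  have hopen : IsOpen {r : sphere (0 : E) 1 | ∀ i, 0 < ℓ i r} := by
    rw [Set.ofPred_forall]
    exact isOpen_iInter_of_finite fun i => isOpen_lt continuous_const (by fun_prop)
  rw [hopen.frontier_eq, closure_sphere_setOf_forall_pos ℓ hq]
  ext r
  simp only [Set.mem_sdiff, Set.mem_ofPred_eq, not_forall, not_lt]
  exact and_congr_right fun h => exists_congr fun i => ⟨fun hi => le_antisymm hi (h i), le_of_eq⟩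

end PolyhedralCone

theorem one_sub_cos_two_mul_div_sin_two_mul (x : ℝ) : (1 - cos (2 * x)) / sin (2 * x) = tan x := by
  rw [cos_two_mul', sin_two_mul, tan_eq_sin_div_cos]
  rcases eq_or_ne (sin x) 0 with h | h
  · simp [h]
  · rw [← sin_sq_add_cos_sq x]
    field_simp
    ring

-- For `α ≤ β ≤ π - α` both weights on the right are nonnegative.
theorem sin_two_mul_mul_sin_mul_sub_cos_mul (α β a b : ℝ) :
    sin (2 * α) * (sin β * a - cos β * b) =
      sin (β + α) * (sin α * a - cos α * b) + sin (β - α) * (sin α * a + cos α * b) := by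
  rw [sin_two_mul, sin_add, sin_sub]
  ring

theorem sin_mul_sub_cos_mul_pos {α β a b : ℝ} (hα : 0 < α) (hα' : α < π / 2) (hαβ : α ≤ β)
    (hβ : β ≤ π - α) (h₁ : 0 < sin α * a - cos α * b) (h₂ : 0 < sin α * a + cos α * b) :
    0 < sin β * a - cos β * b := by
  have hsin₂ : 0 < sin (2 * α) := sin_pos_of_pos_of_lt_pi (by linarith) (by linarith)
  have hadd : 0 ≤ sin (β + α) := sin_nonneg_of_nonneg_of_le_pi (by linarith) (by linarith)
  have hsub : 0 ≤ sin (β - α) := sin_nonneg_of_nonneg_of_le_pi (by linarith) (by linarith)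
  have hsum : 0 < sin (β + α) + sin (β - α) := by
    rw [sin_add, sin_sub]
    have := sin_pos_of_pos_of_lt_pi (by linarith : 0 < β) (by linarith : β < π)
    nlinarith [cos_pos_of_mem_Ioo ⟨by linarith, hα'⟩]
  refine pos_of_mul_pos_right ?_ hsin₂.le
  rw [sin_two_mul_mul_sin_mul_sub_cos_mul]
  rcases hadd.lt_or_eq with hadd | hadd
  · exact add_pos_of_pos_of_nonneg (mul_pos hadd h₁) (mul_nonneg hsub h₂.le)
  · rw [← hadd, zero_add] at hsum
    rw [← hadd, zero_mul, zero_add]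
    exact mul_pos hsum h₂

theorem inner_uvec (p k : ℕ) (x : EuclideanSpace ℝ (Fin 4)) :
    ⟪uvec p k, x⟫ = 2 * sin (π * k / p) * (sin (π * k / p) * x 0 - cos (π * k / p) * x 1) := by
  have h : 2 * π * k / p = 2 * (π * k / p) := by ring
  simp only [uvec, EuclideanSpace.inner_eq_star_dotProduct, h, cos_two_mul', sin_two_mul]
  simp only [dotProduct, Pi.star_apply, star_trivial, Fin.sum_univ_four, Matrix.cons_val_zero,
    Matrix.cons_val_one, Matrix.cons_val, mul_neg, mul_zero, add_zero]
  rw [← sin_sq_add_cos_sq (π * k / p)]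
  ring

theorem inner_uvec_pos_iff {p k : ℕ} (hk : 0 < k) (hkp : k < p) (x : EuclideanSpace ℝ (Fin 4)) :
    0 < ⟪uvec p k, x⟫ ↔ 0 < sin (π * k / p) * x 0 - cos (π * k / p) * x 1 := by
  have hkp' : (k : ℝ) < p := by exact_mod_cast hkp
  have hk' : (0 : ℝ) < k := by exact_mod_cast hk
  have hsin : 0 < sin (π * k / p) := sin_pos_of_pos_of_lt_pi
    (div_pos (mul_pos pi_pos hk') (by linarith))
    (by rw [div_lt_iff₀ (by linarith)]; nlinarith [pi_pos])
  rw [inner_uvec, mul_pos_iff_of_pos_left (by positivity)]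

theorem pi_div_mem_Ioo {p : ℕ} (hp : 3 ≤ p) : π / p ∈ Set.Ioo 0 (π / 2) := by
  have hp' : (3 : ℝ) ≤ p := by exact_mod_cast hp
  exact ⟨by positivity, div_lt_div_of_pos_left pi_pos two_pos (by linarith)⟩

theorem mem_Delta_iff {p : ℕ} (hp : 3 ≤ p) (r : Sph3) :
    r ∈ Delta p ↔
      0 < tan (π / p) * (r : EuclideanSpace ℝ (Fin 4)) 0 - (r : EuclideanSpace ℝ (Fin 4)) 1 ∧
      0 < tan (π / p) * (r : EuclideanSpace ℝ (Fin 4)) 0 + (r : EuclideanSpace ℝ (Fin 4)) 1 := by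
  set a := (r : EuclideanSpace ℝ (Fin 4)) 0
  set b := (r : EuclideanSpace ℝ (Fin 4)) 1
  obtain ⟨hα, hα'⟩ := pi_div_mem_Ioo hp
  have hcos : 0 < cos (π / p) := cos_pos_of_mem_Ioo ⟨by linarith, hα'⟩
  have hsub : sin (π / p) * a - cos (π / p) * b = cos (π / p) * (tan (π / p) * a - b) := by
    rw [tan_eq_sin_div_cos]; field_simp
  have hadd : sin (π / p) * a + cos (π / p) * b = cos (π / p) * (tan (π / p) * a + b) := by
    rw [tan_eq_sin_div_cos]; field_simp
  rw [← mul_pos_iff_of_pos_left hcos, ← mul_pos_iff_of_pos_left hcos (b := _ + _), ← hsub, ← hadd]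
  constructor
  · intro h
    have h₁ := (inner_uvec_pos_iff one_pos (by omega) r).1 (h 1 le_rfl (by omega))
    have h₂ := (inner_uvec_pos_iff (by omega) (by omega) r).1 (h (p - 1) (by omega) le_rfl)
    have hlast : π * ((p - 1 : ℕ) : ℝ) / p = π - π / p := by
      rw [Nat.cast_sub (by omega)]; field_simp; ring
    rw [Nat.cast_one, mul_one] at h₁
    rw [hlast, sin_pi_sub, cos_pi_sub, neg_mul, sub_neg_eq_add] at h₂
    exact ⟨h₁, h₂⟩
  · rintro ⟨h₁, h₂⟩ k hk₁ hk₂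
    have hk₁' : (1 : ℝ) ≤ k := by exact_mod_cast hk₁
    have hk₂' : (k : ℝ) ≤ p - 1 := by
      rw [← Nat.cast_one, ← Nat.cast_sub (by omega)]; exact_mod_cast hk₂
    rw [inner_uvec_pos_iff (by omega) (by omega)]
    refine sin_mul_sub_cos_mul_pos hα hα' ?_ ?_ h₁ h₂
    · exact div_le_div_of_nonneg_right (le_mul_of_one_le_right pi_pos.le hk₁') (by positivity)
    · rw [le_sub_iff_add_le, ← add_div, div_le_iff₀ (by positivity)]
      nlinarith [pi_pos]

theorem wedge_boundary_iff {σ a b : ℝ} (hσ : 0 < σ) :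
    ((0 ≤ σ * a - b ∧ 0 ≤ σ * a + b) ∧ (σ * a - b = 0 ∨ σ * a + b = 0)) ↔
      (b = σ * a ∧ 0 < a ∨ b = -σ * a ∧ 0 < a) ∨ a = 0 ∧ b = 0 := by
  constructor
  · rintro ⟨⟨h₁, h₂⟩, h | h⟩
    all_goals rcases (by nlinarith : 0 ≤ a).lt_or_eq with ha | ha
    all_goals first
      | exact Or.inl (Or.inl ⟨by linarith, ha⟩)
      | exact Or.inl (Or.inr ⟨by linarith, ha⟩)
      | exact Or.inr ⟨ha.symm, by subst ha; linarith⟩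
  · rintro ((⟨rfl, ha⟩ | ⟨rfl, ha⟩) | ⟨rfl, rfl⟩)
    · exact ⟨⟨by linarith, by nlinarith⟩, Or.inl (by ring)⟩
    · exact ⟨⟨by nlinarith, by linarith⟩, Or.inr (by ring)⟩
    · simp

/-- For `p ≥ 3` and `σ₁ = (1 - cos(2π/p))/sin(2π/p)`, the frontier of `Δ`
in `S³` is the union of `A = {r₁ = σ₁ r₀, r₀ > 0}`, `B = {r₁ = -σ₁ r₀, r₀ > 0}` and
`C = {r₀ = r₁ = 0}`, and these three sets are pairwise disjoint. -/
theorem stmt6 (p : ℕ) (hp : 3 ≤ p) (σ₁ : ℝ)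
    (hσ : σ₁ = (1 - Real.cos (2 * Real.pi / (p : ℝ))) / Real.sin (2 * Real.pi / (p : ℝ)))
    (A B C : Set Sph3)
    (hA : A = {r : Sph3 | (r : EuclideanSpace ℝ (Fin 4)) 1 = σ₁ * (r : EuclideanSpace ℝ (Fin 4)) 0 ∧
      0 < (r : EuclideanSpace ℝ (Fin 4)) 0})
    (hB : B = {r : Sph3 | (r : EuclideanSpace ℝ (Fin 4)) 1 = -σ₁ * (r : EuclideanSpace ℝ (Fin 4)) 0 ∧
      0 < (r : EuclideanSpace ℝ (Fin 4)) 0})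
    (hC : C = {r : Sph3 | (r : EuclideanSpace ℝ (Fin 4)) 0 = 0 ∧ (r : EuclideanSpace ℝ (Fin 4)) 1 = 0}) :
    frontier (Delta p) = A ∪ B ∪ C ∧ A ∩ B = ∅ ∧ A ∩ C = ∅ ∧ B ∩ C = ∅ := by
  subst hσ hA hB hC
  rw [mul_div_assoc, one_sub_cos_two_mul_div_sin_two_mul]
  have hσ : 0 < tan (π / p) :=
    tan_pos_of_pos_of_lt_pi_div_two (pi_div_mem_Ioo hp).1 (pi_div_mem_Ioo hp).2
  let ℓ : Fin 2 → EuclideanSpace ℝ (Fin 4) →L[ℝ] ℝ :=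
    ![tan (π / p) • EuclideanSpace.proj 0 - EuclideanSpace.proj 1,
      tan (π / p) • EuclideanSpace.proj 0 + EuclideanSpace.proj 1]
  have hΔ : Delta p = {r : Sph3 | ∀ i, 0 < ℓ i r} := by
    ext r; simp [ℓ, Fin.forall_fin_two, mem_Delta_iff hp]
  have hfr := frontier_sphere_setOf_forall_pos ℓ (q := EuclideanSpace.single 0 1)
    (by simp [Fin.forall_fin_two, ℓ, hσ])
  refine ⟨?_, ?_, ?_, ?_⟩
  · rw [hΔ, hfr]
    ext r
    simp only [ℓ, Set.mem_union, Set.mem_ofPred_eq, Fin.forall_fin_two, Fin.exists_fin_two,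
      Matrix.cons_val_zero, Matrix.cons_val_one, sub_apply, add_apply, smul_apply, PiLp.proj_apply,
      smul_eq_mul]
    exact wedge_boundary_iff hσ
  · exact Set.eq_empty_of_forall_notMem fun r ⟨⟨h₁, h₀⟩, h₁', _⟩ => by nlinarith
  · exact Set.eq_empty_of_forall_notMem fun r ⟨⟨_, h₀⟩, h₀', _⟩ => by linarith
  · exact Set.eq_empty_of_forall_notMem fun r ⟨⟨_, h₀⟩, h₀', _⟩ => by linarith
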